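/- Counting inequalities for k-step CBS: the matrix Γ defining the selection event for the k-step circular binary segmentation model has number of rows equal to 2∑_{ℓ=1}^{k}[C(|I^{(ℓ)}_{j_ℓ}| − 1, 2) − 1 + ∑_{j′ ≠ j_ℓ} C(|I^{(ℓ)}_{j′}| − 1, 2)], where I^{(ℓ)}_j are the intervals formed at step ℓ and j_ℓ is the maximizing interval. -/

import Mathlib

/-- Sum of the entries of `y` over the (1-indexed) data positions `a, ..., b`. -/
noncomputable def segSum (n : ℕ) (y : Fin n → ℝ) (a b : ℕ) : ℝ :=
  ∑ i ∈ Finset.Icc a b, if h : i - 1 < n then y ⟨i - 1, h⟩ else 0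

/-- Modified (circular) CUSUM statistic `g_{(s,a,b,e)}ᵀ y`: the weighted difference between
the sample mean of `y_{(a+1):b}` and the sample mean of `y` over `{s:a} ∪ {(b+1):e}`. -/
noncomputable def ccusum (n : ℕ) (s a b e : ℕ) (y : Fin n → ℝ) : ℝ :=
  Real.sqrt (1 / (1 / ((b : ℝ) - a) + 1 / ((e : ℝ) - s - b + a))) *
    (segSum n y (a + 1) b / ((b : ℝ) - a) -
     (segSum n y s a + segSum n y (b + 1) e) / ((e : ℝ) - s + a - b + 1))

/-- Boundary set after `m` steps of circular binary segmentation: the endpoints `0, n`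
together with the changepoint pairs `a i, b i` for `i < m`. -/
def cbsBoundary (n m : ℕ) (a b : ℕ → ℕ) : Set ℕ :=
  {0, n} ∪ {x | ∃ i < m, x = a i ∨ x = b i}

/-- `(s, e)` is one of the intervals of the partition of `{1,...,n}` induced by the first
`m` changepoint pairs. -/
def cbsInterval (n m : ℕ) (a b : ℕ → ℕ) (s e : ℕ) : Prop :=
  1 ≤ s ∧ s ≤ e ∧ e ≤ n ∧ (s - 1) ∈ cbsBoundary n m a b ∧ e ∈ cbsBoundary n m a b ∧
    ∀ c ∈ cbsBoundary n m a b, ¬(s ≤ c ∧ c < e)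

open Classical in
/-- The finite set of intervals `(s, e)` formed at step `m + 1` (i.e. after `m` steps). -/
noncomputable def cbsIntervals (n m : ℕ) (a b : ℕ → ℕ) : Finset (ℕ × ℕ) :=
  (Finset.Icc 1 n ×ˢ Finset.Icc 1 n).filter fun p => cbsInterval n m a b p.1 p.2

/-- The `k`-step circular binary segmentation selection event for the model
`{a_{1:k}, b_{1:k}, d_{1:k}}`: at each step `ℓ`, the pair `(a ℓ, b ℓ)` lies inside one of the
current intervals and its signed modified CUSUM statistic dominates, in absolute value, the
statistic of every other candidate pair in every current interval. -/
def cbsEvent (n k : ℕ) (a b : ℕ → ℕ) (d : ℕ → ℝ) (y : Fin n → ℝ) : Prop :=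
  ∀ ℓ < k, ∃ s e, cbsInterval n ℓ a b s e ∧ s ≤ a ℓ ∧ a ℓ < b ℓ ∧ b ℓ < e ∧
    ∀ s' e', cbsInterval n ℓ a b s' e' → ∀ r t, s' ≤ r → r < t → t < e' →
      ¬(s' = s ∧ r = a ℓ ∧ t = b ℓ ∧ e' = e) →
        ccusum n s' r t e' y ≤ d ℓ * ccusum n s (a ℓ) (b ℓ) e y ∧
        - ccusum n s' r t e' y ≤ d ℓ * ccusum n s (a ℓ) (b ℓ) e y

lemma segSum_add (n : ℕ) (y z : Fin n → ℝ) (a b : ℕ) :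
    segSum n (y + z) a b = segSum n y a b + segSum n z a b := by
  unfold segSum
  rw [← Finset.sum_add_distrib]
  refine Finset.sum_congr rfl fun i _ => ?_
  by_cases h : i - 1 < n <;> simp [h]

lemma segSum_smul (n : ℕ) (c : ℝ) (y : Fin n → ℝ) (a b : ℕ) :
    segSum n (c • y) a b = c * segSum n y a b := by
  unfold segSum
  rw [Finset.mul_sum]
  refine Finset.sum_congr rfl fun i _ => ?_
  by_cases h : i - 1 < n <;> simp [h]

lemma ccusum_linear (n s a b e : ℕ) : IsLinearMap ℝ (fun y => ccusum n s a b e y) := by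
  constructor
  · intro y z; unfold ccusum; rw [segSum_add, segSum_add, segSum_add]; ring
  · intro c y; unfold ccusum; rw [segSum_smul, segSum_smul, segSum_smul]; simp; ring

lemma linear_dot {n : ℕ} {L : (Fin n → ℝ) → ℝ} (hL : IsLinearMap ℝ L) (y : Fin n → ℝ) :
    ∑ j : Fin n, L (Pi.single j 1) * y j = L y := by
  let F := IsLinearMap.mk' L hL
  have hy : y = ∑ j : Fin n, Pi.single j (y j) := (Finset.univ_sum_single y).symm
  calc ∑ j : Fin n, L (Pi.single j 1) * y j
      = ∑ j : Fin n, F (Pi.single j (y j)) := by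
        refine Finset.sum_congr rfl fun j _ => ?_
        have : Pi.single j (y j) = y j • (Pi.single j (1:ℝ) : Fin n → ℝ) := by
          rw [← Pi.single_smul]; simp
        rw [this, map_smul]; simp [F, mul_comm]
    _ = F (∑ j : Fin n, Pi.single j (y j)) := (map_sum F _ _).symm
    _ = L y := by rw [← hy]; rfl


def pairsF (s e : ℕ) : Finset (ℕ × ℕ) :=
  ((Finset.Ico s e) ×ˢ (Finset.Ico s e)).filter fun q => q.1 < q.2

lemma card_pairsF (s e : ℕ) : (pairsF s e).card = (e - s).choose 2 := by
  have h1 : (pairsF s e).card = ∑ t0 ∈ Finset.Ico s e,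
      ((pairsF s e).filter fun q => q.2 = t0).card := by
    apply Finset.card_eq_sum_card_fiberwise
    intro q hq
    simp only [Finset.mem_coe, pairsF, Finset.mem_filter, Finset.mem_product] at hq
    exact hq.1.2
  have h2 : ∀ t0 ∈ Finset.Ico s e,
      ((pairsF s e).filter fun q => q.2 = t0) = (Finset.Ico s t0).image fun r => (r, t0) := by
    intro t0 ht0
    rw [Finset.mem_Ico] at ht0
    ext ⟨r, t⟩
    simp only [pairsF, Finset.mem_filter, Finset.mem_product, Finset.mem_Ico,
      Finset.mem_image, Prod.mk.injEq]
    constructor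
    · intro h
      exact ⟨r, by omega, rfl, by omega⟩
    · rintro ⟨x, hx, rfl, rfl⟩
      omega
  rw [h1, Finset.sum_congr rfl fun t0 ht0 => by rw [h2 t0 ht0]]
  have h3 : ∀ t0, ((Finset.Ico s t0).image fun r => (r, t0)).card = t0 - s := by
    intro t0
    rw [Finset.card_image_of_injective _ (fun x y h => by simpa using congrArg Prod.fst h)]
    simp
  rw [Finset.sum_congr rfl fun t0 _ => h3 t0]
  rw [Finset.sum_Ico_eq_sum_range]
  simp only [Nat.add_sub_cancel_left]
  rw [Finset.sum_range_id, Nat.choose_two_right]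

lemma mem_cbsIntervals {n m : ℕ} {a b : ℕ → ℕ} {p : ℕ × ℕ} :
    p ∈ cbsIntervals n m a b ↔ cbsInterval n m a b p.1 p.2 := by
  classical
  simp only [cbsIntervals, Finset.mem_filter, Finset.mem_product, Finset.mem_Icc]
  constructor
  · exact fun h => h.2
  · intro h
    obtain ⟨h1, h2, h3, h4⟩ := h
    exact ⟨⟨⟨h1, by omega⟩, by omega, h3⟩, ⟨h1, h2, h3, h4⟩⟩

lemma cbsInterval_unique {n m : ℕ} {a b : ℕ → ℕ} {s e s' e' x : ℕ}
    (h1 : cbsInterval n m a b s e) (h2 : cbsInterval n m a b s' e')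
    (hx1 : s ≤ x) (hx2 : x < e) (hx3 : s' ≤ x) (hx4 : x < e') : s = s' ∧ e = e' := by
  obtain ⟨hs1, hse, hen, hbs, hbe, hno⟩ := h1
  obtain ⟨hs1', hse', hen', hbs', hbe', hno'⟩ := h2
  have hss : s = s' := by
    by_contra hne
    rcases Nat.lt_or_ge s s' with h | h
    · exact hno (s' - 1) hbs' (by omega)
    · exact hno' (s - 1) hbs (by omega)
  subst hss
  have hee : e = e' := by
    by_contra hne
    rcases Nat.lt_or_ge e e' with h | h
    · exact hno' e hbe (by omega)
    · exact hno e' hbe' (by omega)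
  exact ⟨rfl, hee⟩

noncomputable def Tset (n : ℕ) (a b : ℕ → ℕ) (ℓ : ℕ) : Finset ((ℕ × ℕ) × (ℕ × ℕ)) :=
  ((cbsIntervals n ℓ a b) ×ˢ ((Finset.Icc 0 n) ×ˢ (Finset.Icc 0 n))).filter
    fun x => x.1.1 ≤ x.2.1 ∧ x.2.1 < x.2.2 ∧ x.2.2 < x.1.2

lemma mem_Tset {n : ℕ} {a b : ℕ → ℕ} {ℓ : ℕ} {x : (ℕ × ℕ) × (ℕ × ℕ)} :
    x ∈ Tset n a b ℓ ↔ cbsInterval n ℓ a b x.1.1 x.1.2 ∧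
      x.1.1 ≤ x.2.1 ∧ x.2.1 < x.2.2 ∧ x.2.2 < x.1.2 := by
  simp only [Tset, Finset.mem_filter, Finset.mem_product, Finset.mem_Icc]
  constructor
  · rintro ⟨⟨h1, _⟩, h2⟩
    exact ⟨mem_cbsIntervals.mp h1, h2⟩
  · rintro ⟨h1, h2⟩
    have he := h1.2.2.1
    exact ⟨⟨mem_cbsIntervals.mpr h1, ⟨by omega, by omega⟩, by omega, by omega⟩, h2⟩

lemma card_Tset (n : ℕ) (a b : ℕ → ℕ) (ℓ : ℕ) :
    (Tset n a b ℓ).card = ∑ p ∈ cbsIntervals n ℓ a b, (p.2 - p.1).choose 2 := by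
  classical
  have h1 : (Tset n a b ℓ).card = ∑ p ∈ cbsIntervals n ℓ a b,
      ((Tset n a b ℓ).filter fun x => x.1 = p).card := by
    apply Finset.card_eq_sum_card_fiberwise
    intro x hx
    exact mem_cbsIntervals.mpr (mem_Tset.mp hx).1
  rw [h1]
  refine Finset.sum_congr rfl fun p hp => ?_
  have hp' := mem_cbsIntervals.mp hp
  have hcard : ((Tset n a b ℓ).filter fun x => x.1 = p) =
      (pairsF p.1 p.2).image fun q => (p, q) := by
    ext x
    simp only [Finset.mem_filter, Finset.mem_image]
    constructor
    · rintro ⟨hx, rfl⟩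
      obtain ⟨hc, h3, h4, h5⟩ := mem_Tset.mp hx
      refine ⟨x.2, ?_, Prod.mk.eta⟩
      simp only [pairsF, Finset.mem_filter, Finset.mem_product, Finset.mem_Ico]
      exact ⟨⟨⟨h3, by omega⟩, by omega, by omega⟩, h4⟩
    · rintro ⟨q, hq, rfl⟩
      simp only [pairsF, Finset.mem_filter, Finset.mem_product, Finset.mem_Ico] at hq
      obtain ⟨⟨⟨a1, a2⟩, a3, a4⟩, a5⟩ := hq
      exact ⟨mem_Tset.mpr ⟨hp', a1, a5, a4⟩, rfl⟩
  rw [hcard, Finset.card_image_of_injective _ (fun u v h => by simpa using congrArg Prod.snd h)]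
  exact card_pairsF p.1 p.2

open Classical in
noncomputable def selS (n : ℕ) (a b : ℕ → ℕ) (ℓ : ℕ) : ℕ :=
  if h : ∃ s e, cbsInterval n ℓ a b s e ∧ s ≤ a ℓ ∧ a ℓ < b ℓ ∧ b ℓ < e then h.choose else 0

open Classical in
noncomputable def selE (n : ℕ) (a b : ℕ → ℕ) (ℓ : ℕ) : ℕ :=
  if h : ∃ s e, cbsInterval n ℓ a b s e ∧ s ≤ a ℓ ∧ a ℓ < b ℓ ∧ b ℓ < e
  then h.choose_spec.choose else 0

lemma sel_spec {n : ℕ} {a b : ℕ → ℕ} {ℓ : ℕ}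
    (h : ∃ s e, cbsInterval n ℓ a b s e ∧ s ≤ a ℓ ∧ a ℓ < b ℓ ∧ b ℓ < e) :
    cbsInterval n ℓ a b (selS n a b ℓ) (selE n a b ℓ) ∧
      selS n a b ℓ ≤ a ℓ ∧ a ℓ < b ℓ ∧ b ℓ < selE n a b ℓ := by
  classical
  simp only [selS, selE, dif_pos h]
  exact h.choose_spec.choose_spec

noncomputable def selTup (n : ℕ) (a b : ℕ → ℕ) (ℓ : ℕ) : (ℕ × ℕ) × (ℕ × ℕ) :=
  ((selS n a b ℓ, selE n a b ℓ), (a ℓ, b ℓ))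

noncomputable def Jset (n : ℕ) (a b : ℕ → ℕ) (ℓ : ℕ) : Finset (Bool × ((ℕ × ℕ) × (ℕ × ℕ))) :=
  Finset.univ ×ˢ ((Tset n a b ℓ).erase (selTup n a b ℓ))

noncomputable def Jall (n k : ℕ) (a b : ℕ → ℕ) : Finset ((_ : ℕ) × (Bool × ((ℕ × ℕ) × (ℕ × ℕ)))) :=
  (Finset.range k).sigma fun ℓ => Jset n a b ℓ

lemma card_Jall {n k : ℕ} {a b : ℕ → ℕ}
    (hab : ∀ ℓ < k, ∃ s e, cbsInterval n ℓ a b s e ∧ s ≤ a ℓ ∧ a ℓ < b ℓ ∧ b ℓ < e) :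
    (Jall n k a b).card = 2 * ∑ ℓ ∈ Finset.range k,
      ((∑ p ∈ cbsIntervals n ℓ a b, Nat.choose (p.2 - p.1) 2) - 1) := by
  rw [Jall, Finset.card_sigma, Finset.mul_sum]
  refine Finset.sum_congr rfl fun ℓ hℓ => ?_
  have hℓk := Finset.mem_range.mp hℓ
  obtain ⟨hI, h1, h2, h3⟩ := sel_spec (hab ℓ hℓk)
  have hmem : selTup n a b ℓ ∈ Tset n a b ℓ :=
    mem_Tset.mpr ⟨hI, h1, h2, h3⟩
  rw [Jset, Finset.card_product, Finset.card_univ, Fintype.card_bool,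
    Finset.card_erase_of_mem hmem, card_Tset]

noncomputable def rowFun (n : ℕ) (a b : ℕ → ℕ) (d : ℕ → ℝ) (ℓ : ℕ)
    (x : Bool × ((ℕ × ℕ) × (ℕ × ℕ))) (y : Fin n → ℝ) : ℝ :=
  d ℓ * ccusum n (selS n a b ℓ) (a ℓ) (b ℓ) (selE n a b ℓ) y -
    (if x.1 then 1 else -1) * ccusum n x.2.1.1 x.2.2.1 x.2.2.2 x.2.1.2 y

lemma rowFun_linear (n : ℕ) (a b : ℕ → ℕ) (d : ℕ → ℝ) (ℓ : ℕ)
    (x : Bool × ((ℕ × ℕ) × (ℕ × ℕ))) : IsLinearMap ℝ (rowFun n a b d ℓ x) := by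
  have L1 := ccusum_linear n (selS n a b ℓ) (a ℓ) (b ℓ) (selE n a b ℓ)
  have L2 := ccusum_linear n x.2.1.1 x.2.2.1 x.2.2.2 x.2.1.2
  constructor
  · intro y z; unfold rowFun; rw [L1.map_add, L2.map_add]; ring
  · intro c y; unfold rowFun; rw [L1.map_smul, L2.map_smul]; simp only [smul_eq_mul]; ring

/-- The `k`-step circular binary segmentation selection event equals
`{y : Γy ≥ 0}` for a matrix `Γ` whose number of rows is
`2 ∑_{ℓ=1}^{k} [C(|I^{(ℓ)}_{j_ℓ}| − 1, 2) − 1 + ∑_{j' ≠ j_ℓ} C(|I^{(ℓ)}_{j'}| − 1, 2)]`,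
i.e. `2 ∑_{ℓ=1}^{k} [(∑_{intervals I at step ℓ} C(|I| − 1, 2)) − 1]`, where for an interval
`(s, e)` one has `|I| − 1 = e − s`. -/
theorem k_step_cbs_polyhedral (n k : ℕ) (hn : 4 ≤ n)
    (a b : ℕ → ℕ) (d : ℕ → ℝ) (hd : ∀ ℓ < k, d ℓ = 1 ∨ d ℓ = -1)
    (hab : ∀ ℓ < k, ∃ s e, cbsInterval n ℓ a b s e ∧ s ≤ a ℓ ∧ a ℓ < b ℓ ∧ b ℓ < e) :
    ∃ Γ : Matrix
        (Fin (2 * ∑ ℓ ∈ Finset.range k,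
          ((∑ p ∈ cbsIntervals n ℓ a b, Nat.choose (p.2 - p.1) 2) - 1)))
        (Fin n) ℝ,
      ∀ y : Fin n → ℝ, cbsEvent n k a b d y ↔ ∀ i, 0 ≤ Γ.mulVec y i := by
  classical
  have eqN : (2 * ∑ ℓ ∈ Finset.range k,
      ((∑ p ∈ cbsIntervals n ℓ a b, Nat.choose (p.2 - p.1) 2) - 1)) = (Jall n k a b).card :=
    (card_Jall hab).symm
  set N := 2 * ∑ ℓ ∈ Finset.range k,
      ((∑ p ∈ cbsIntervals n ℓ a b, Nat.choose (p.2 - p.1) 2) - 1) with hNdef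
  let E : Fin N → {x // x ∈ Jall n k a b} :=
    fun i => (Jall n k a b).equivFin.symm (Fin.cast eqN i)
  let Γ : Matrix (Fin N) (Fin n) ℝ :=
    Matrix.of fun i j => rowFun n a b d (E i).1.1 (E i).1.2 (Pi.single j 1)
  have hmv : ∀ (y : Fin n → ℝ) (i : Fin N),
      Γ.mulVec y i = rowFun n a b d (E i).1.1 (E i).1.2 y := by
    intro y i
    simpa [Γ, Matrix.mulVec, dotProduct] using
      linear_dot (rowFun_linear n a b d (E i).1.1 (E i).1.2) y
  refine ⟨Γ, fun y => ⟨fun hev i => ?_, fun hineq => ?_⟩⟩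
  · rw [hmv]
    rcases hEi : E i with ⟨⟨ℓ, s0, ⟨s', e'⟩, r, t⟩, hmem⟩
    dsimp only
    rw [Jall, Finset.mem_sigma] at hmem
    obtain ⟨hℓr, hJ⟩ := hmem
    have hℓk := Finset.mem_range.mp hℓr
    rw [Jset, Finset.mem_product] at hJ
    have hJ2 := hJ.2
    rw [Finset.mem_erase] at hJ2
    obtain ⟨hneq, hT⟩ := hJ2
    obtain ⟨hI', h's, hrt, hte⟩ := mem_Tset.mp hT
    obtain ⟨hIsel, hsa, habl, hbe⟩ := sel_spec (hab ℓ hℓk)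
    obtain ⟨s, e, hI, hsa', habl', hbe', hforall⟩ := hev ℓ hℓk
    obtain ⟨hseq, heeq⟩ := cbsInterval_unique hI hIsel hsa' (lt_trans habl' hbe')
      hsa (lt_trans habl hbe)
    have hne : ¬(s' = s ∧ r = a ℓ ∧ t = b ℓ ∧ e' = e) := by
      rintro ⟨rfl, rfl, rfl, rfl⟩
      exact hneq (by rw [selTup, ← hseq, ← heeq])
    obtain ⟨hle1, hle2⟩ := hforall s' e' hI' r t h's hrt hte hne
    rw [hseq, heeq] at hle1 hle2
    unfold rowFun
    cases s0 <;> simp only [if_true, if_false, Bool.false_eq_true, ite_true, ite_false] <;> linarith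
  · intro ℓ hℓ
    obtain ⟨hIsel, hsa, habl, hbe⟩ := sel_spec (hab ℓ hℓ)
    refine ⟨selS n a b ℓ, selE n a b ℓ, hIsel, hsa, habl, hbe, ?_⟩
    intro s' e' hI' r t h's hrt hte hne
    have hTmem : ((s', e'), (r, t)) ∈ Tset n a b ℓ := mem_Tset.mpr ⟨hI', h's, hrt, hte⟩
    have hne' : ((s', e'), (r, t)) ≠ selTup n a b ℓ := by
      intro hcon
      rw [selTup, Prod.mk.injEq, Prod.mk.injEq, Prod.mk.injEq] at hcon
      exact hne ⟨hcon.1.1, hcon.2.1, hcon.2.2, hcon.1.2⟩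
    have key : ∀ s0 : Bool, 0 ≤ rowFun n a b d ℓ (s0, ((s', e'), (r, t))) y := by
      intro s0
      have hmemJ : (⟨ℓ, (s0, ((s', e'), (r, t)))⟩ :
          (_ : ℕ) × (Bool × ((ℕ × ℕ) × (ℕ × ℕ)))) ∈ Jall n k a b := by
        rw [Jall, Finset.mem_sigma]
        refine ⟨Finset.mem_range.mpr hℓ, ?_⟩
        rw [Jset, Finset.mem_product]
        exact ⟨Finset.mem_univ _, Finset.mem_erase.mpr ⟨hne', hTmem⟩⟩
      have hi := hineq (Fin.cast eqN.symm ((Jall n k a b).equivFin ⟨_, hmemJ⟩))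
      rw [hmv] at hi
      have hEi : E (Fin.cast eqN.symm ((Jall n k a b).equivFin ⟨_, hmemJ⟩)) =
          ⟨⟨ℓ, (s0, ((s', e'), (r, t)))⟩, hmemJ⟩ := by
        simp [E]
      rw [hEi] at hi
      exact hi
    have k1 := key true
    have k2 := key false
    unfold rowFun at k1 k2
    simp only [if_true, Bool.false_eq_true, if_false, ite_true, ite_false] at k1 k2
    constructor <;> linarith
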